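/- For a smooth function U, the corrected boundary-derivative combination through eighth order, (1/Δx)[U(x+Δx/2) − U(x−Δx/2)] − (1/Δx)Σ_{m∈{2,4,6,8}} c_m Δx^m [U⁽ᵐ⁾(x+Δx/2) − U⁽ᵐ⁾(x−Δx/2)] with (c₂,c₄,c₆,c₈) = (1/24, −7/5760, 31/967680, −127/154828800), equals U'(x) + O(Δx¹⁰). -/

import Mathlib

/-!
With `D = d/dx`, the centred difference `U(x + h/2) - U(x - h/2)` is `2 sinh(hD/2) U`, and
`1 - Σ cₘ tᵐ` is the expansion of `t / (2 sinh(t/2))` through `t⁸`, so the combination is `hD U`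
up to truncation. Concretely: expanding `U⁽ᵐ⁾(x ± h/2)` by Taylor's theorem with remainder
`O(h^(11-m))`, the Taylor parts of the combination sum to exactly `h U'(x)`, every remainder is
`O(h¹¹)` after multiplication by `hᵐ`, and dividing by `h` leaves `O(h¹⁰)`.
-/

open Filter Asymptotics Topology Set Finset
open scoped Nat

section Taylor

variable {E : Type*} [NormedAddCommGroup E] [NormedSpace ℝ E]

theorem taylor_isBigO_univ {f : ℝ → E} {n : ℕ} (hf : ContDiff ℝ (n + 1) f) (x₀ : ℝ) :
    (fun x ↦ f x - taylorWithinEval f n univ x₀ x) =O[𝓝 x₀] fun x ↦ (x - x₀) ^ (n + 1) := by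
  have hrem := (taylor_isLittleO_univ (x₀ := x₀) (by exact_mod_cast hf)).isBigO
  have hterm : (fun x ↦ (((n + 1 : ℝ) * n !)⁻¹ * (x - x₀) ^ (n + 1)) •
      iteratedDerivWithin (n + 1) f univ x₀) =O[𝓝 x₀] fun x ↦ (x - x₀) ^ (n + 1) :=
    .of_bound (‖((n + 1 : ℝ) * n !)⁻¹‖ * ‖iteratedDerivWithin (n + 1) f univ x₀‖) <|
      .of_forall fun x ↦ le_of_eq <| by rw [norm_smul, norm_mul]; ring
  refine (hrem.add hterm).congr_left fun x ↦ ?_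
  simp only [taylorWithinEval_succ]
  abel

theorem taylor_isBigO_comp_const_mul {f : ℝ → E} {n : ℕ} (hf : ContDiff ℝ (n + 1) f)
    (x₀ c : ℝ) :
    (fun h ↦ f (x₀ + c * h) - taylorWithinEval f n univ x₀ (x₀ + c * h)) =O[𝓝 0]
      fun h ↦ h ^ (n + 1) := by
  have hlim : Tendsto (fun h : ℝ ↦ x₀ + c * h) (𝓝 0) (𝓝 x₀) := by
    have : Continuous fun h : ℝ ↦ x₀ + c * h := by fun_prop
    simpa using this.tendsto 0
  refine ((taylor_isBigO_univ hf x₀).comp_tendsto hlim).trans ?_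
  simpa [Function.comp_def, mul_pow] using
    (isBigO_refl (fun h : ℝ ↦ h ^ (n + 1)) (𝓝 0)).const_mul_left (c ^ (n + 1))

end Taylor

theorem iteratedDeriv_iteratedDeriv {𝕜 F : Type*} [NontriviallyNormedField 𝕜]
    [NormedAddCommGroup F] [NormedSpace 𝕜 F] (k m : ℕ) (f : 𝕜 → F) :
    iteratedDeriv k (iteratedDeriv m f) = iteratedDeriv (k + m) f := by
  simp only [iteratedDeriv_eq_iterate, Function.iterate_add_apply]

theorem taylorWithinEval_iteratedDeriv_univ (f : ℝ → ℝ) (m n : ℕ) (x₀ x : ℝ) :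
    taylorWithinEval (iteratedDeriv m f) n univ x₀ x =
      ∑ k ∈ range (n + 1), (x - x₀) ^ k / k ! * iteratedDeriv (k + m) f x₀ := by
  simp only [taylor_within_apply, iteratedDerivWithin_univ, iteratedDeriv_iteratedDeriv,
    smul_eq_mul]
  exact Finset.sum_congr rfl fun k _ ↦ by ring

/-- With `d k = f⁽ᵏ⁾(x)`, the centred difference at `x ± h/2` of the degree-`n` Taylor polynomial
of `f⁽ᵐ⁾` at `x`. -/
noncomputable def centredTaylorDiff (d : ℕ → ℝ) (m n : ℕ) (h : ℝ) : ℝ :=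
  ∑ k ∈ range (n + 1), ((h / 2) ^ k - (-(h / 2)) ^ k) / k ! * d (k + m)

theorem isBigO_pow_mul_centredDiff_iteratedDeriv {f : ℝ → ℝ} {m n : ℕ}
    (hf : ContDiff ℝ (m + n + 1 : ℕ) f) (x : ℝ) :
    (fun h ↦ h ^ m * (iteratedDeriv m f (x + h / 2) - iteratedDeriv m f (x - h / 2)
      - centredTaylorDiff (fun k ↦ iteratedDeriv k f x) m n h)) =O[𝓝 0]
      fun h ↦ h ^ (m + n + 1) := by
  have hfm : ContDiff ℝ (n + 1 : ℕ) (iteratedDeriv m f) := by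
    rw [iteratedDeriv_eq_iterate]
    exact ContDiff.iterate_deriv' (n + 1) m (by rwa [show n + 1 + m = m + n + 1 by omega])
  have hplus := taylor_isBigO_comp_const_mul (by exact_mod_cast hfm) x 2⁻¹
  have hminus := taylor_isBigO_comp_const_mul (by exact_mod_cast hfm) x (-2⁻¹)
  refine ((isBigO_refl (fun h : ℝ ↦ h ^ m) _).mul (hplus.sub hminus)).congr (fun h ↦ ?_)
    (fun h ↦ by ring)
  have hright : x + 2⁻¹ * h = x + h / 2 := by ring
  have hleft : x + -2⁻¹ * h = x - h / 2 := by ring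
  simp only [hright, hleft, centredTaylorDiff, taylorWithinEval_iteratedDeriv_univ,
    add_sub_cancel_left, sub_sub_cancel_left, sub_div, sub_mul, Finset.sum_sub_distrib]
  ring

theorem centredTaylorDiff_afdWeno_eq (d : ℕ → ℝ) (h : ℝ) :
    centredTaylorDiff d 0 10 h
        - (1 / 24 * h ^ 2 * centredTaylorDiff d 2 8 h
          + -7 / 5760 * h ^ 4 * centredTaylorDiff d 4 6 h
          + 31 / 967680 * h ^ 6 * centredTaylorDiff d 6 4 h
          + -127 / 154828800 * h ^ 8 * centredTaylorDiff d 8 2 h) = h * d 1 := by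
  simp only [centredTaylorDiff, Finset.sum_range_succ, Finset.sum_range_zero]
  norm_num [Nat.factorial]
  ring

/-- For a smooth `U`, the corrected boundary-derivative combination through
eighth order, with coefficients `(c₂,c₄,c₆,c₈) = (1/24, −7/5760, 31/967680, −127/154828800)`,
equals `U'(x) + O(Δx¹⁰)`. -/
theorem stmt16 (U : ℝ → ℝ) (x : ℝ) (hU : ContDiff ℝ 11 U) :
    (fun h : ℝ => (U (x + h / 2) - U (x - h / 2)) / h
        - ((1 / 24) * h ^ 2 * (iteratedDeriv 2 U (x + h / 2) - iteratedDeriv 2 U (x - h / 2))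
            + (-7 / 5760) * h ^ 4 * (iteratedDeriv 4 U (x + h / 2) - iteratedDeriv 4 U (x - h / 2))
            + (31 / 967680) * h ^ 6 *
                (iteratedDeriv 6 U (x + h / 2) - iteratedDeriv 6 U (x - h / 2))
            + (-127 / 154828800) * h ^ 8 *
                (iteratedDeriv 8 U (x + h / 2) - iteratedDeriv 8 U (x - h / 2))) / h
        - deriv U x)
      =O[𝓝[>] (0 : ℝ)] (fun h : ℝ => h ^ 10) := by
  have hcentred {m n : ℕ} (hf : ContDiff ℝ (m + n + 1 : ℕ) U) :=
    isBigO_pow_mul_centredDiff_iteratedDeriv hf x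
  have hremainder := (hcentred (m := 0) (n := 10) hU).sub
    ((((hcentred (m := 2) (n := 8) hU).const_mul_left (1 / 24)).add
      ((hcentred (m := 4) (n := 6) hU).const_mul_left (-7 / 5760))).add
      ((hcentred (m := 6) (n := 4) hU).const_mul_left (31 / 967680)) |>.add
      ((hcentred (m := 8) (n := 2) hU).const_mul_left (-127 / 154828800)))
  refine ((hremainder.mono nhdsWithin_le_nhds).mul (isBigO_refl (fun h : ℝ ↦ h⁻¹) _)).congr' ?_ ?_
  · filter_upwards [self_mem_nhdsWithin] with h (hh : 0 < h)
    have hTaylor := centredTaylorDiff_afdWeno_eq (fun k ↦ iteratedDeriv k U x) h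
    rw [iteratedDeriv_one] at hTaylor
    rw [eq_div_of_mul_eq hh.ne' ((mul_comm _ _).trans hTaylor.symm), iteratedDeriv_zero]
    ring
  · filter_upwards [self_mem_nhdsWithin] with h (hh : 0 < h)
    field_simp
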